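/- arXiv:2210.03008 — 2 statements merged into one kernel-verified Lean document; each statement's English description precedes it below -/
import Mathlib

section
/- Let (M, ν) be a probability space, and let Φ, Φ̃ : M → [0, ∞) be measurable with exp(-Φ), exp(-Φ̃) ∈ L¹(M, ν). Set Z = ∫ exp(-Φ) dν and Z̃ = ∫ exp(-Φ̃) dν, and assume Z̃ > 0. Then log(Z/Z̃) ≤ (1/Z̃) ∫ |Φ - Φ̃| dν. -/
/-!
Pointwise `exp (-Φ) - exp (-Φ̃) ≤ exp (-Φ) (Φ̃ - Φ) ≤ |Φ - Φ̃|` (tangent line of `exp` at `-Φ`, and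
`exp (-Φ) ≤ 1` because `Φ ≥ 0`), so `Z - Z̃ ≤ ∫ |Φ - Φ̃| dν`; then apply `log x ≤ x - 1` at `x = Z / Z̃`.
-/

open MeasureTheory Real

lemma Real.exp_neg_sub_exp_neg_le_abs_sub {a b : ℝ} (ha : 0 ≤ a) :
    exp (-a) - exp (-b) ≤ |a - b| := by
  have htangent : exp (-a) * (a - b + 1) ≤ exp (-b) := by
    rw [show -b = -a + (a - b) by ring, exp_add]
    exact mul_le_mul_of_nonneg_left (add_one_le_exp _) (exp_pos _).le
  have hle_one : exp (-a) ≤ 1 := exp_le_one_iff.2 (neg_nonpos.2 ha)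
  calc exp (-a) - exp (-b) ≤ exp (-a) * (b - a) := by linarith
    _ ≤ exp (-a) * |b - a| := mul_le_mul_of_nonneg_left (le_abs_self _) (exp_pos _).le
    _ ≤ |a - b| := by rw [abs_sub_comm]; exact mul_le_of_le_one_left (abs_nonneg _) hle_one

lemma Real.log_div_le_sub_div {a b : ℝ} (ha : 0 < a) (hb : 0 < b) :
    log (a / b) ≤ (a - b) / b := by
  calc log (a / b) ≤ a / b - 1 := log_le_sub_one_of_pos (div_pos ha hb)
    _ = (a - b) / b := by field_simp

namespace MeasureTheory

variable {α : Type*} [MeasurableSpace α] {μ : Measure α} {f g : α → ℝ}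

lemma integral_exp_neg_sub_le_integral_abs_sub (hf : ∀ x, 0 ≤ f x)
    (hIf : Integrable (fun x ↦ exp (-f x)) μ) (hIg : Integrable (fun x ↦ exp (-g x)) μ)
    (hdiff : Integrable (fun x ↦ |f x - g x|) μ) :
    ∫ x, exp (-f x) ∂μ - ∫ x, exp (-g x) ∂μ ≤ ∫ x, |f x - g x| ∂μ := by
  rw [← integral_sub hIf hIg]
  exact integral_mono (hIf.sub hIg) hdiff fun x ↦ exp_neg_sub_exp_neg_le_abs_sub (hf x)

lemma log_integral_exp_neg_div_le (hf : ∀ x, 0 ≤ f x)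
    (hIf : Integrable (fun x ↦ exp (-f x)) μ) (hIg : Integrable (fun x ↦ exp (-g x)) μ)
    (hdiff : Integrable (fun x ↦ |f x - g x|) μ) (hg_pos : 0 < ∫ x, exp (-g x) ∂μ) :
    log ((∫ x, exp (-f x) ∂μ) / ∫ x, exp (-g x) ∂μ) ≤
      (∫ x, |f x - g x| ∂μ) / ∫ x, exp (-g x) ∂μ := by
  have : NeZero μ := ⟨by rintro rfl; simp at hg_pos⟩
  calc _ ≤ (∫ x, exp (-f x) ∂μ - ∫ x, exp (-g x) ∂μ) / ∫ x, exp (-g x) ∂μ :=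
        log_div_le_sub_div (integral_exp_pos hIf) hg_pos
    _ ≤ _ := by
        gcongr
        exact integral_exp_neg_sub_le_integral_abs_sub hf hIf hIg hdiff

end MeasureTheory

theorem log_evidence_ratio_bound_general {M : Type*} [MeasurableSpace M] (ν : Measure M)
    (Φ Φt : M → ℝ)
    (hΦnn : ∀ m, 0 ≤ Φ m)
    (hI : Integrable (fun m => Real.exp (-Φ m)) ν)
    (hIt : Integrable (fun m => Real.exp (-Φt m)) ν)
    (hdiff : Integrable (fun m => |Φ m - Φt m|) ν)
    (Z Zt : ℝ) (hZ : Z = ∫ m, Real.exp (-Φ m) ∂ν)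
    (hZt : Zt = ∫ m, Real.exp (-Φt m) ∂ν) (hZtpos : 0 < Zt) :
    Real.log (Z / Zt) ≤ (1 / Zt) * ∫ m, |Φ m - Φt m| ∂ν := by
  subst hZ hZt
  rw [one_div_mul_eq_div]
  exact log_integral_exp_neg_div_le hΦnn hI hIt hdiff hZtpos

theorem log_evidence_ratio_bound {M : Type*} [MeasurableSpace M] (ν : Measure M)
    [IsProbabilityMeasure ν]
    (Φ Φt : M → ℝ) (hΦmeas : Measurable Φ) (hΦtmeas : Measurable Φt)
    (hΦnn : ∀ m, 0 ≤ Φ m) (hΦtnn : ∀ m, 0 ≤ Φt m)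
    (hI : Integrable (fun m => Real.exp (-Φ m)) ν)
    (hIt : Integrable (fun m => Real.exp (-Φt m)) ν)
    (hdiff : Integrable (fun m => |Φ m - Φt m|) ν)
    (Z Zt : ℝ) (hZ : Z = ∫ m, Real.exp (-Φ m) ∂ν)
    (hZt : Zt = ∫ m, Real.exp (-Φt m) ∂ν) (hZtpos : 0 < Zt) :
    Real.log (Z / Zt) ≤ (1 / Zt) * ∫ m, |Φ m - Φt m| ∂ν :=
  log_evidence_ratio_bound_general ν Φ Φt hΦnn hI hIt hdiff Z Zt hZ hZt hZtpos
end

section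
/- Let (M, ν) be a probability space, C a symmetric positive definite n×n matrix, y ∈ ℝⁿ, and f, g : M → ℝⁿ measurable with f, g ∈ L²(M, ν; ℝⁿ). Define Φ(m) = (1/2)(y - f(m))ᵀ C⁻¹ (y - f(m)) and Φ̃(m) = (1/2)(y - g(m))ᵀ C⁻¹ (y - g(m)). Then ‖Φ - Φ̃‖_{L¹(M,ν)} ≤ (1/2) ‖C⁻¹‖₂ (‖f‖_{L²} + ‖g‖_{L²} + 2‖y‖₂) ‖f - g‖_{L²(M,ν;ℝⁿ)}. -/
open MeasureTheory RealInnerProductSpace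
open scoped NNReal ENNReal

/-! With `u = y - f m` and `v = y - g m`, the identity
`⟪u, A u⟫ - ⟪v, A v⟫ = ⟪u - v, A u⟫ + ⟪v, A (u - v)⟫` bounds `|Φ - Φt|` pointwise by
`‖A‖ / 2 * (‖f m‖ + ‖g m‖ + 2 ‖y‖) * ‖f m - g m‖`. Cauchy–Schwarz in `L²(ν)` bounds the `L¹` norm
of this product, and Minkowski bounds the `L²` norm of the first factor, a constant having
`L²` norm equal to its absolute value on a probability space. -/

theorem abs_inner_map_self_sub_inner_map_self_le {E : Type*} [NormedAddCommGroup E]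
    [InnerProductSpace ℝ E] (A : E →L[ℝ] E) (u v : E) :
    |⟪u, A u⟫ - ⟪v, A v⟫| ≤ ‖A‖ * (‖u‖ + ‖v‖) * ‖u - v‖ := by
  have split : ⟪u, A u⟫ - ⟪v, A v⟫ = ⟪u - v, A u⟫ + ⟪v, A (u - v)⟫ := by
    simp only [inner_sub_left, inner_sub_right, map_sub]
    ring
  have h₁ : |⟪u - v, A u⟫| ≤ ‖u - v‖ * (‖A‖ * ‖u‖) :=
    (abs_real_inner_le_norm _ _).trans (by gcongr; exact A.le_opNorm u)
  have h₂ : |⟪v, A (u - v)⟫| ≤ ‖v‖ * (‖A‖ * ‖u - v‖) :=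
    (abs_real_inner_le_norm _ _).trans (by gcongr; exact A.le_opNorm _)
  calc |⟪u, A u⟫ - ⟪v, A v⟫| ≤ |⟪u - v, A u⟫| + |⟪v, A (u - v)⟫| := split ▸ abs_add_le _ _
    _ ≤ ‖u - v‖ * (‖A‖ * ‖u‖) + ‖v‖ * (‖A‖ * ‖u - v‖) := add_le_add h₁ h₂
    _ = ‖A‖ * (‖u‖ + ‖v‖) * ‖u - v‖ := by ring

theorem abs_inner_map_self_sub_sub_inner_map_self_sub_le {E : Type*} [NormedAddCommGroup E]
    [InnerProductSpace ℝ E] (A : E →L[ℝ] E) (y a b : E) :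
    |⟪y - a, A (y - a)⟫ - ⟪y - b, A (y - b)⟫| ≤ ‖A‖ * (‖a‖ + ‖b‖ + 2 * ‖y‖) * ‖a - b‖ := by
  have hsum : ‖y - a‖ + ‖y - b‖ ≤ ‖a‖ + ‖b‖ + 2 * ‖y‖ := by
    linarith [norm_sub_le y a, norm_sub_le y b]
  calc _ ≤ ‖A‖ * (‖y - a‖ + ‖y - b‖) * ‖(y - a) - (y - b)‖ :=
        abs_inner_map_self_sub_inner_map_self_le A _ _
    _ ≤ ‖A‖ * (‖a‖ + ‖b‖ + 2 * ‖y‖) * ‖a - b‖ := by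
        rw [sub_sub_sub_cancel_left, norm_sub_rev b a]
        gcongr ‖A‖ * ?_ * _

theorem eLpNorm_le_mul_eLpNorm_mul_eLpNorm_of_norm_le {α E F G : Type*} {m : MeasurableSpace α}
    {μ : Measure α} [NormedAddCommGroup E] [NormedAddCommGroup F] [NormedAddCommGroup G]
    {p q r : ℝ≥0∞} {Φ : α → G} {φ : α → E} {ψ : α → F} (hφ : AEStronglyMeasurable φ μ) (hψ : AEStronglyMeasurable ψ μ) (c : ℝ≥0)
    (h : ∀ᵐ x ∂μ, ‖Φ x‖ ≤ c * ‖φ x‖ * ‖ψ x‖) [p.HolderTriple q r] :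
    eLpNorm Φ r μ ≤ c * eLpNorm φ p μ * eLpNorm ψ q μ := by
  refine (eLpNorm_mono_ae (g := fun x => c * ‖φ x‖ * ‖ψ x‖) ?_).trans
    (eLpNorm_le_eLpNorm_mul_eLpNorm'_of_norm hφ hψ (fun s t => c * ‖s‖ * ‖t‖) c ?_)
  · filter_upwards [h] with x hx
    exact hx.trans (Real.le_norm_self _)
  · filter_upwards with x
    simp [abs_of_nonneg, mul_assoc]

theorem eLpNorm_norm_add_norm_add_const_le {α E : Type*} {m : MeasurableSpace α} {μ : Measure α}
    [IsProbabilityMeasure μ] [NormedAddCommGroup E] {f g : α → E} {p : ℝ≥0∞}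
    (hf : AEStronglyMeasurable f μ) (hg : AEStronglyMeasurable g μ) (hp : 1 ≤ p) (c : ℝ) :
    eLpNorm (fun x => ‖f x‖ + ‖g x‖ + c) p μ ≤ eLpNorm f p μ + eLpNorm g p μ + ‖c‖ₑ := by
  have hconst : eLpNorm (fun _ : α => c) p μ = ‖c‖ₑ := by
    simp [eLpNorm_const c (one_pos.trans_le hp).ne' (IsProbabilityMeasure.ne_zero μ)]
  calc _ ≤ eLpNorm (fun x => ‖f x‖ + ‖g x‖) p μ + eLpNorm (fun _ : α => c) p μ :=
        eLpNorm_add_le (hf.norm.add hg.norm) aestronglyMeasurable_const hp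
    _ ≤ eLpNorm (fun x => ‖f x‖) p μ + eLpNorm (fun x => ‖g x‖) p μ + ‖c‖ₑ := by
        rw [hconst]
        gcongr
        exact eLpNorm_add_le hf.norm hg.norm hp
    _ = eLpNorm f p μ + eLpNorm g p μ + ‖c‖ₑ := by rw [eLpNorm_norm, eLpNorm_norm]

theorem potential_difference_L1_bound_general {M : Type*} [MeasurableSpace M] (ν : Measure M)
    [IsProbabilityMeasure ν] {n : ℕ}
    (C : Matrix (Fin n) (Fin n) ℝ)
    (y : EuclideanSpace ℝ (Fin n))
    (f g : M → EuclideanSpace ℝ (Fin n))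
    (hf : MemLp f 2 ν) (hg : MemLp g 2 ν)
    (Φ Φt : M → ℝ)
    (hΦ : ∀ m, Φ m =
      (1 / 2) * ⟪y - f m, Matrix.toEuclideanCLM (𝕜 := ℝ) C⁻¹ (y - f m)⟫)
    (hΦt : ∀ m, Φt m =
      (1 / 2) * ⟪y - g m, Matrix.toEuclideanCLM (𝕜 := ℝ) C⁻¹ (y - g m)⟫) :
    (eLpNorm (fun m => Φ m - Φt m) 1 ν).toReal
      ≤ (1 / 2) * ‖Matrix.toEuclideanCLM (𝕜 := ℝ) C⁻¹‖ *
          ((eLpNorm f 2 ν).toReal + (eLpNorm g 2 ν).toReal + 2 * ‖y‖) *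
          (eLpNorm (fun m => f m - g m) 2 ν).toReal := by
  set A := Matrix.toEuclideanCLM (𝕜 := ℝ) C⁻¹
  have pointwise : ∀ m, ‖Φ m - Φt m‖
      ≤ (‖A‖₊ / 2 : ℝ≥0) * ‖‖f m‖ + ‖g m‖ + 2 * ‖y‖‖ * ‖f m - g m‖ := by
    intro m
    calc ‖Φ m - Φt m‖ = 1 / 2 * |⟪y - f m, A (y - f m)⟫ - ⟪y - g m, A (y - g m)⟫| := by
          rw [hΦ, hΦt, ← mul_sub, Real.norm_eq_abs, abs_mul, abs_of_pos one_half_pos]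
      _ ≤ 1 / 2 * (‖A‖ * (‖f m‖ + ‖g m‖ + 2 * ‖y‖) * ‖f m - g m‖) := by
          gcongr
          exact abs_inner_map_self_sub_sub_inner_map_self_sub_le A y (f m) (g m)
      _ = _ := by
          rw [Real.norm_of_nonneg (by positivity)]
          push_cast
          ring
  have holder := eLpNorm_le_mul_eLpNorm_mul_eLpNorm_of_norm_le (p := 2) (q := 2) (r := 1)
    (ψ := fun m => f m - g m) ((hf.1.norm.add hg.1.norm).add_const _) (hf.sub hg).1 _
    (.of_forall pointwise)
  have triangle := eLpNorm_norm_add_norm_add_const_le hf.1 hg.1 one_le_two (2 * ‖y‖) (μ := ν)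
  have bound := holder.trans (mul_le_mul_left (mul_le_mul_right triangle _) _)
  have hf₂ := hf.eLpNorm_ne_top
  have hg₂ := hg.eLpNorm_ne_top
  have hfg₂ := (hf.sub hg).eLpNorm_ne_top
  refine (ENNReal.toReal_mono (by finiteness) bound).trans_eq ?_
  rw [ENNReal.toReal_mul, ENNReal.toReal_mul, ENNReal.toReal_add (by finiteness) (by finiteness),
    ENNReal.toReal_add hf₂ hg₂, toReal_enorm, Real.norm_of_nonneg (by positivity),
    ENNReal.coe_toReal]
  push_cast
  ring

theorem potential_difference_L1_bound {M : Type*} [MeasurableSpace M] (ν : Measure M)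
    [IsProbabilityMeasure ν] {n : ℕ}
    (C : Matrix (Fin n) (Fin n) ℝ) (hC : C.PosDef)
    (y : EuclideanSpace ℝ (Fin n))
    (f g : M → EuclideanSpace ℝ (Fin n))
    (hf : MemLp f 2 ν) (hg : MemLp g 2 ν)
    (Φ Φt : M → ℝ)
    (hΦ : ∀ m, Φ m =
      (1 / 2) * ⟪y - f m, Matrix.toEuclideanCLM (𝕜 := ℝ) C⁻¹ (y - f m)⟫)
    (hΦt : ∀ m, Φt m =
      (1 / 2) * ⟪y - g m, Matrix.toEuclideanCLM (𝕜 := ℝ) C⁻¹ (y - g m)⟫) :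
    (eLpNorm (fun m => Φ m - Φt m) 1 ν).toReal
      ≤ (1 / 2) * ‖Matrix.toEuclideanCLM (𝕜 := ℝ) C⁻¹‖ *
          ((eLpNorm f 2 ν).toReal + (eLpNorm g 2 ν).toReal + 2 * ‖y‖) *
          (eLpNorm (fun m => f m - g m) 2 ν).toReal :=
  potential_difference_L1_bound_general ν C y f g hf hg Φ Φt hΦ hΦt
end
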